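/- arXiv:1802.01621 — 5 statements merged into one kernel-verified Lean document; each statement's English description precedes it below -/
import Mathlib

section
/- The composition of a rotation by angle α about point a with a rotation by angle β about point c, where α + β is not a multiple of 2π, is a rotation by angle α + β about some point x in the plane. -/
open Complex

/-- The composition of a rotation by angle `α` about point `a`
with a rotation by angle `β` about point `c` (points of the plane `ℂ`),
where `α + β` is not a multiple of `2π`, is a rotation by angle `α + β`
about some point `x` of the plane. -/
theorem comp_of_rotations_is_rotation
    (a c : ℂ) (α β : ℝ) (h : ∀ n : ℤ, α + β ≠ n * (2 * Real.pi)) :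
    ∃ x : ℂ, ∀ z : ℂ,
      c + Complex.exp (β * Complex.I) * ((a + Complex.exp (α * Complex.I) * (z - a)) - c)
        = x + Complex.exp ((α + β) * Complex.I) * (z - x) := by
  set E := Complex.exp (((α : ℂ) + β) * Complex.I) with hE
  have he : E ≠ 1 := by
    intro h0
    obtain ⟨n, hn⟩ := Complex.exp_eq_one_iff.mp h0
    apply h n
    have h2 : ((α + β : ℝ) : ℂ) = (n : ℂ) * (2 * Real.pi) := by
      push_cast
      have := mul_right_cancel₀ Complex.I_ne_zero (by linear_combination hn :
        ((α : ℂ) + β) * Complex.I = ((n : ℂ) * (2 * Real.pi)) * Complex.I)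
      push_cast at this ⊢; linear_combination this
    exact_mod_cast h2
  have hsub : (1 : ℂ) - E ≠ 0 := sub_ne_zero.mpr (Ne.symm he)
  have hmul : E = Complex.exp (α * Complex.I) * Complex.exp (β * Complex.I) := by
    rw [hE, ← Complex.exp_add]; ring_nf
  refine ⟨(c + Complex.exp (β * Complex.I) * (a - c) - E * a) / (1 - E), fun z => ?_⟩
  field_simp
  rw [mul_comm Complex.I (α : ℂ)]
  linear_combination (-(z - a) * (1 - E)) * hmul
end

section
/- For a convex polygonal chain (all turns in the same direction) in the plane whose total turn angle is less than π/2, the chain is radially monotone with respect to its first vertex. -/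
/-- The piecewise-linear parametrization of the polygonal chain with vertices
`u 0, u 1, u 2, …`: for `t ∈ [i, i+1]` it interpolates linearly between
`u i` and `u (i+1)`. -/
noncomputable def polyChain (u : ℕ → ℂ) (t : ℝ) : ℂ :=
  u ⌊t⌋₊ + (t - ⌊t⌋₊) • (u (⌊t⌋₊ + 1) - u ⌊t⌋₊)

/-- The signed turn angle of the chain at the vertex between edge `i`
(from `u i` to `u (i+1)`) and edge `i+1`. -/
noncomputable def turnAngle (u : ℕ → ℂ) (i : ℕ) : ℝ :=
  Complex.arg ((u (i + 2) - u (i + 1)) / (u (i + 1) - u i))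

/-- A convex polygonal chain `u 0, …, u (k-1)` (all signed turn
angles of the same sign) in the plane whose total turn angle is less than
`π/2` is radially monotone with respect to its first vertex `u 0`. -/
theorem convex_chain_small_turn_radially_monotone
    (u : ℕ → ℂ) (k : ℕ) (hk : 2 ≤ k)
    (hedges : ∀ i, i < k - 1 → u (i + 1) - u i ≠ 0)
    (hconvex : (∀ i, i < k - 2 → 0 ≤ turnAngle u i) ∨
               (∀ i, i < k - 2 → turnAngle u i ≤ 0))
    (htotal : ∑ i ∈ Finset.range (k - 2), |turnAngle u i| < Real.pi / 2) :
    StrictMonoOn (fun t => dist (polyChain u t) (u 0))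
      (Set.Icc (0 : ℝ) ((k : ℝ) - 1)) := by
  clear hconvex
  set e : ℕ → ℂ := fun i => u (i + 1) - u i with he
  have hturn : ∀ i, turnAngle u i = Complex.arg (e (i+1) / e i) := by
    intro i; rfl
  -- angle-valued arg of ratio of edges
  have hang : ∀ j i, j ≤ i → i < k - 1 →
      ((Complex.arg (e i / e j) : Real.Angle)) =
        ((∑ m ∈ Finset.Ico j i, turnAngle u m : ℝ) : Real.Angle) := by
    intro j i hji hik
    induction i, hji using Nat.le_induction with
    | base =>
        simp [div_self (hedges j hik)]
    | succ i hji ih =>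
        have hik' : i < k - 1 := by omega
        have hj : j < k - 1 := by omega
        have h1 : e (i+1) / e j = (e (i+1) / e i) * (e i / e j) := by
          field_simp
          have h0i := hedges i hik'
          have h0j := hedges j hj
          rw [eq_div_iff (mul_ne_zero_iff.mpr ⟨by assumption, by assumption⟩),
            div_mul_eq_mul_div, div_eq_iff (hedges j hj)]
          ring
        rw [h1, Complex.arg_mul_coe_angle
            (div_ne_zero (hedges (i+1) hik) (hedges i hik'))
            (div_ne_zero (hedges i hik') (hedges j hj)),
          ih hik', Finset.sum_Ico_succ_top hji]
        push_cast [Real.Angle.coe_add]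
        rw [← hturn i]
        exact add_comm _ _
  -- bound on partial sums
  have hsum : ∀ j i, i < k - 1 →
      |∑ m ∈ Finset.Ico j i, turnAngle u m| < Real.pi / 2 := by
    intro j i hik
    calc |∑ m ∈ Finset.Ico j i, turnAngle u m|
        ≤ ∑ m ∈ Finset.Ico j i, |turnAngle u m| := Finset.abs_sum_le_sum_abs _ _
      _ ≤ ∑ m ∈ Finset.range (k - 2), |turnAngle u m| := by
          apply Finset.sum_le_sum_of_subset_of_nonneg
          · intro m hm
            simp only [Finset.mem_Ico, Finset.mem_range] at *
            omega
          · intro m _ _; exact abs_nonneg _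
      _ < Real.pi / 2 := htotal
  have hpi : 0 < Real.pi := Real.pi_pos
  -- real-valued arg of ratio of edges
  have harg : ∀ j i, j ≤ i → i < k - 1 →
      Complex.arg (e i / e j) = ∑ m ∈ Finset.Ico j i, turnAngle u m := by
    intro j i hji hik
    have h1 := hang j i hji hik
    have h2 := hsum j i hik
    have h3 : ((∑ m ∈ Finset.Ico j i, turnAngle u m : ℝ) : Real.Angle).toReal
        = ∑ m ∈ Finset.Ico j i, turnAngle u m := by
      rw [Real.Angle.toReal_coe_eq_self_iff_mem_Ioc]
      constructor
      · nlinarith [abs_lt.mp h2]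
      · nlinarith [abs_lt.mp h2]
    rw [← Complex.arg_coe_angle_toReal_eq_arg (e i / e j), h1, h3]
  -- positivity of re of products
  have hre : ∀ j i, j ≤ i → i < k - 1 →
      0 < (e i * (starRingEnd ℂ) (e j)).re := by
    intro j i hji hik
    have h1 : 0 < (e i / e j).re := by
      have := (Complex.abs_arg_lt_pi_div_two_iff (z := e i / e j)).mp
        (by rw [harg j i hji hik]; exact hsum j i hik)
      rcases this with h | h
      · exact h
      · exact absurd h (div_ne_zero (hedges i hik) (hedges j (lt_of_le_of_lt hji hik)))
    have h2 : e i * (starRingEnd ℂ) (e j)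
        = (e i / e j) * ((Complex.normSq (e j) : ℝ) : ℂ) := by
      rw [← Complex.mul_conj]
      field_simp [hedges j (lt_of_le_of_lt hji hik)]
      exact (mul_inv_cancel_right₀ (hedges j (lt_of_le_of_lt hji hik)) _).symm
    rw [h2]
    simp only [Complex.mul_re, Complex.ofReal_re, Complex.ofReal_im, mul_zero, sub_zero]
    exact mul_pos h1 (Complex.normSq_pos.mpr (hedges j (lt_of_le_of_lt hji hik)))
  -- nonnegativity of D_n
  have hD : ∀ n, n < k - 1 → 0 ≤ ((u n - u 0) * (starRingEnd ℂ) (e n)).re := by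
    intro n hn
    have h1 : u n - u 0 = ∑ j ∈ Finset.range n, e j := (Finset.sum_range_sub u n).symm
    rw [h1, Finset.sum_mul, Complex.re_sum]
    apply Finset.sum_nonneg
    intro j hj
    have hj' : j ≤ n := le_of_lt (Finset.mem_range.mp hj)
    have h2 : (e j * (starRingEnd ℂ) (e n)).re = (e n * (starRingEnd ℂ) (e j)).re := by
      rw [← Complex.conj_re (e n * (starRingEnd ℂ) (e j))]
      simp [mul_comm]
    rw [h2]
    exact le_of_lt (hre j n hj' hn)
  -- segment strict monotonicity
  have hL : ∀ n, n < k - 1 → ∀ s1 s2 : ℝ, 0 ≤ s1 → s1 < s2 → s2 ≤ 1 →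
      Complex.normSq (u n + s1 • e n - u 0) < Complex.normSq (u n + s2 • e n - u 0) := by
    intro n hn s1 s2 hs1 h12 hs2
    have hE : 0 < Complex.normSq (e n) := Complex.normSq_pos.mpr (hedges n hn)
    have hDn := hD n hn
    have expand : ∀ s : ℝ, Complex.normSq (u n + s • e n - u 0) =
        Complex.normSq (u n - u 0) + s^2 * Complex.normSq (e n)
          + 2 * (s * ((u n - u 0) * (starRingEnd ℂ) (e n)).re) := by
      intro s
      have : u n + s • e n - u 0 = (u n - u 0) + s • e n := by ring
      rw [this, Complex.normSq_add]
      rw [Complex.real_smul, Complex.normSq_mul, Complex.normSq_ofReal, map_mul,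
        Complex.conj_ofReal]
      have : ((u n - u 0) * (((s : ℂ)) * (starRingEnd ℂ) (e n))).re
          = s * ((u n - u 0) * (starRingEnd ℂ) (e n)).re := by
        rw [mul_comm (s : ℂ), ← mul_assoc, Complex.mul_re]
        simp [Complex.mul_re, Complex.mul_im]
        ring
      rw [this]
      ring
    rw [expand s1, expand s2]
    nlinarith [mul_pos (mul_pos (sub_pos.mpr h12) (by linarith : (0:ℝ) < s1 + s2)) hE,
      mul_nonneg (le_of_lt (sub_pos.mpr h12)) hDn]
  -- monotonicity at integer vertices
  have hM : ∀ m, m ≤ k - 1 → ∀ n, n ≤ m →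
      Complex.normSq (u n - u 0) ≤ Complex.normSq (u m - u 0) := by
    intro m
    induction m with
    | zero => intro _ n hn; interval_cases n; rfl
    | succ m ih =>
        intro hm n hn
        rcases Nat.eq_or_lt_of_le hn with h | h
        · rw [h]
        · have hn' : n ≤ m := by omega
          have hmk : m < k - 1 := by omega
          refine le_trans (ih (by omega) n hn') (le_of_lt ?_)
          have h0 : u m + (0:ℝ) • e m - u 0 = u m - u 0 := by simp
          have h1 : u m + (1:ℝ) • e m - u 0 = u (m+1) - u 0 := by
            simp only [one_smul, he]; ring
          have h := hL m hmk 0 1 le_rfl zero_lt_one le_rfl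
          rw [h0, h1] at h
          exact h
  -- squared-distance version
  have hg : ∀ t1 ∈ Set.Icc (0:ℝ) ((k:ℝ)-1), ∀ t2 ∈ Set.Icc (0:ℝ) ((k:ℝ)-1), t1 < t2 →
      Complex.normSq (polyChain u t1 - u 0) < Complex.normSq (polyChain u t2 - u 0) := by
    intro t1 ht1 t2 ht2 h12
    obtain ⟨ht1l, ht1r⟩ := ht1
    obtain ⟨ht2l, ht2r⟩ := ht2
    obtain ⟨n1, hn1⟩ : ∃ n, ⌊t1⌋₊ = n := ⟨_, rfl⟩
    obtain ⟨n2, hn2⟩ : ∃ n, ⌊t2⌋₊ = n := ⟨_, rfl⟩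
    have hf1 : (n1:ℝ) ≤ t1 := hn1 ▸ Nat.floor_le ht1l
    have hf1' : t1 < (n1:ℝ) + 1 := hn1 ▸ Nat.lt_floor_add_one t1
    have hf2 : (n2:ℝ) ≤ t2 := hn2 ▸ Nat.floor_le ht2l
    have hf2' : t2 < (n2:ℝ) + 1 := hn2 ▸ Nat.lt_floor_add_one t2
    have hkcast : ((k - 1 : ℕ) : ℝ) = (k:ℝ) - 1 := by
      push_cast [Nat.cast_sub (by omega : 1 ≤ k)]; ring
    have hp : ∀ t : ℝ, polyChain u t - u 0 = u ⌊t⌋₊ + (t - ⌊t⌋₊) • e ⌊t⌋₊ - u 0 := by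
      intro t; simp [polyChain, he]
    have hn12 : n1 ≤ n2 := by
      rw [← hn1, ← hn2]; exact Nat.floor_le_floor (le_of_lt h12)
    rcases Nat.eq_or_lt_of_le hn12 with heq | hlt
    · -- same segment
      have hn1k : n1 < k - 1 := by
        have : (n1:ℝ) < (k:ℝ) - 1 := lt_of_le_of_lt hf1 (lt_of_lt_of_le h12 ht2r)
        rw [← hkcast] at this
        exact_mod_cast this
      rw [hp t1, hp t2, hn1, hn2, ← heq]
      exact hL n1 hn1k (t1 - n1) (t2 - n1) (by linarith) (by linarith)
        (by rw [heq]; linarith)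
    · -- different segments
      have hn1k : n1 < k - 1 := by
        have : (n1:ℝ) < (k:ℝ) - 1 := lt_of_le_of_lt hf1 (lt_of_lt_of_le h12 ht2r)
        rw [← hkcast] at this
        exact_mod_cast this
      have hn2k : n2 ≤ k - 1 := by
        have : (n2:ℝ) ≤ (k:ℝ) - 1 := le_trans hf2 ht2r
        rw [← hkcast] at this
        exact_mod_cast this
      have step1 : Complex.normSq (polyChain u t1 - u 0)
          < Complex.normSq (u (n1+1) - u 0) := by
        have h1 : u n1 + (1:ℝ) • e n1 - u 0 = u (n1+1) - u 0 := by
          simp only [one_smul, he]; ring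
        have h := hL n1 hn1k (t1 - n1) 1 (by linarith) (by linarith) le_rfl
        rw [h1] at h
        rw [hp t1, hn1]
        exact h
      have step2 : Complex.normSq (u (n1+1) - u 0) ≤ Complex.normSq (u n2 - u 0) :=
        hM n2 hn2k (n1+1) hlt
      have step3 : Complex.normSq (u n2 - u 0) ≤ Complex.normSq (polyChain u t2 - u 0) := by
        rcases eq_or_lt_of_le hf2 with h | h
        · rw [hp t2, hn2, ← h]
          simp
        · have hn2k' : n2 < k - 1 := by
            have : (n2:ℝ) < (k:ℝ) - 1 := lt_of_lt_of_le h ht2r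
            rw [← hkcast] at this
            exact_mod_cast this
          have h0 : u n2 + (0:ℝ) • e n2 - u 0 = u n2 - u 0 := by simp
          have hh := hL n2 hn2k' 0 (t2 - n2) le_rfl (by linarith) (by linarith)
          rw [h0] at hh
          rw [hp t2, hn2]
          exact le_of_lt hh
      linarith
  -- conclude
  intro t1 ht1 t2 ht2 h12
  have h := hg t1 ht1 t2 ht2 h12
  have h1 : ∀ t, dist (polyChain u t) (u 0) ^ 2 = Complex.normSq (polyChain u t - u 0) := by
    intro t; rw [Complex.dist_eq, Complex.sq_norm]
  refine lt_of_pow_lt_pow_left₀ 2 dist_nonneg ?_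
  rw [h1, h1]
  exact h
end

section
/- Let R and L be two polygonal chains in the plane emanating from a common point r, with the initial directions making a positive angle, and suppose both chains are radially monotone with respect to every one of their vertices, and the angle at r between the initial edges is positive. If additionally at every pair of corresponding points the chain L is obtained from R by a rotation about r by a positive angle ω (they are congruent chains rotated by ω about r), then R and L intersect only at r. -/
/-- Let `R` be the polygonal chain with vertices
`u 0, …, u (k-1)` starting at `r = u 0`, and let `L` be its image under the
rotation about `r` by a positive angle `ω ∈ (0, π)` (so `L` and `R` are
congruent chains from `r`, their initial directions making the positive angle
`ω`).  If both chains are radially monotone with respect to every one of their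
vertices (the distance to each vertex strictly increases along the rest of the
chain), then `R` and `L` intersect only at `r`. -/
theorem rotated_radially_monotone_chains_meet_only_at_root
    (u : ℕ → ℂ) (k : ℕ) (hk : 2 ≤ k) (ω : ℝ) (hω : 0 < ω) (hωπ : ω < Real.pi)
    (hfirst : u 1 ≠ u 0)
    (v : ℕ → ℂ)
    (hv : ∀ i, v i = u 0 + Complex.exp (ω * Complex.I) * (u i - u 0))
    (hRmono : ∀ j, j ≤ k - 1 →
      StrictMonoOn (fun t => dist (polyChain u t) (u j))
        (Set.Icc (j : ℝ) ((k : ℝ) - 1)))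
    (hLmono : ∀ j, j ≤ k - 1 →
      StrictMonoOn (fun t => dist (polyChain v t) (v j))
        (Set.Icc (j : ℝ) ((k : ℝ) - 1))) :
    polyChain u '' Set.Icc (0 : ℝ) ((k : ℝ) - 1) ∩
      polyChain v '' Set.Icc (0 : ℝ) ((k : ℝ) - 1) ⊆ {u 0} := by
  have hE : ‖Complex.exp (↑ω * Complex.I)‖ = 1 :=
    Complex.norm_exp_ofReal_mul_I ω
  have hrot : ∀ x : ℝ, polyChain v x =
      u 0 + Complex.exp (↑ω * Complex.I) * (polyChain u x - u 0) := by
    intro x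
    simp only [polyChain, hv, Complex.real_smul]
    ring
  have hdist : ∀ x : ℝ, dist (polyChain v x) (u 0) = dist (polyChain u x) (u 0) := by
    intro x
    rw [hrot x, Complex.dist_eq, Complex.dist_eq, add_sub_cancel_left, norm_mul, hE, one_mul]
  have hmono : StrictMonoOn (fun t => dist (polyChain u t) (u 0))
      (Set.Icc (0 : ℝ) ((k : ℝ) - 1)) := by
    simpa using hRmono 0 (Nat.zero_le _)
  rintro p ⟨⟨s, hs, hps⟩, ⟨t, ht, hpt⟩⟩
  have h1 : dist (polyChain u s) (u 0) = dist (polyChain u t) (u 0) := by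
    rw [hps, ← hdist t, hpt]
  have hst : s = t := hmono.injOn hs ht h1
  subst hst
  have hfix : p = u 0 + Complex.exp (↑ω * Complex.I) * (p - u 0) := by
    conv_lhs => rw [← hpt]
    rw [hrot, hps]
  have hsin : 0 < Real.sin ω := Real.sin_pos_of_pos_of_lt_pi hω hωπ
  have hEne : Complex.exp (↑ω * Complex.I) ≠ 1 := by
    intro h
    have h2 := congrArg Complex.im h
    simp [Complex.exp_ofReal_mul_I_im] at h2
    linarith
  have hz : (1 - Complex.exp (↑ω * Complex.I)) * (p - u 0) = 0 := by
    linear_combination hfix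
  rcases mul_eq_zero.mp hz with h | h
  · exact absurd (by linear_combination -h) hEne
  · have : p = u 0 := by linear_combination h
    simpa using this
end

section
/- Two distinct points a₁, a₂ in the plane and a rotation by angle ω ∈ (0, π) about a₁ sending a point p to p′: any curve from a₂ to p′ that avoids the open disk of radius |a₁ − a₂| centered at a₁ has length at least the length of the circular arc from a₂ to its image, namely ω·|a₁ − a₂|, when p′ is the rotation image of a₂. -/
open Complex


-- chord lemma
lemma chord_lb {r : ℝ} (hr : 0 < r) {z w : ℂ} (hz : r ≤ ‖z‖)
    (hw : r ≤ ‖w‖) :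
    2 * r * |Real.sin (Complex.arg (z / w) / 2)| ≤ ‖z - w‖ := by
  have hz0 : z ≠ 0 := by intro hh; rw [hh] at hz; simp at hz; linarith
  have hw0 : w ≠ 0 := by intro hh; rw [hh] at hw; simp at hw; linarith
  set q := z / w with hq
  have hq0 : q ≠ 0 := div_ne_zero hz0 hw0
  have h1 : ‖z - w‖ = ‖w‖ * ‖q - 1‖ := by
    rw [← norm_mul]
    congr 1
    rw [hq]; field_simp
  have h2 : ‖q - 1‖ ^ 2 = ‖q‖ ^ 2 - 2 * q.re + 1 := by
    rw [Complex.sq_norm, Complex.sq_norm, Complex.normSq_apply, Complex.normSq_apply]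
    simp [Complex.sub_re, Complex.sub_im]
    ring
  have h3 : q.re = ‖q‖ * Real.cos (Complex.arg q) :=
    (Complex.norm_mul_cos_arg q).symm
  have h4 : Real.cos (Complex.arg q) = 1 - 2 * Real.sin (Complex.arg q / 2) ^ 2 := by
    have hc := Real.cos_two_mul (Complex.arg q / 2)
    have hs := Real.sin_sq_add_cos_sq (Complex.arg q / 2)
    have : (2 : ℝ) * (Complex.arg q / 2) = Complex.arg q := by ring
    rw [this] at hc
    linarith
  have h5 : ‖q‖ * ‖w‖ = ‖z‖ := by
    rw [← norm_mul]; congr 1; rw [hq]; field_simp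
  have hqnn : 0 ≤ ‖q‖ := norm_nonneg q
  have hwnn : 0 ≤ ‖w‖ := norm_nonneg w
  have hzw : r * r ≤ ‖z‖ * ‖w‖ :=
    mul_le_mul hz hw hr.le (le_trans hr.le hz)
  have h7 : r ^ 2 ≤ ‖q‖ * ‖w‖ ^ 2 := by nlinarith [hzw, h5]
  have key : (2 * r * |Real.sin (Complex.arg q / 2)|) ^ 2 ≤ ‖z - w‖ ^ 2 := by
    rw [h1]
    nlinarith [h2, h3, h4, _root_.sq_abs (Real.sin (Complex.arg q / 2)),
      sq_nonneg (‖w‖ * (‖q‖ - 1)),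
      mul_le_mul_of_nonneg_left h7 (sq_nonneg (Real.sin (Complex.arg q / 2)))]
  have h6 := Real.sqrt_le_sqrt key
  rwa [Real.sqrt_sq (by positivity), Real.sqrt_sq (norm_nonneg _)] at h6

-- sin lower bound
lemma two_sin_half_lb {x ε : ℝ} (hx1 : |x| ≤ 1) (hε : |x| ^ 2 ≤ 16 * ε) :
    (1 - ε) * |x| ≤ 2 * |Real.sin (x / 2)| := by
  have habs : |Real.sin (x / 2)| = |Real.sin (|x| / 2)| := by
    rcases abs_cases x with ⟨hh, _⟩ | ⟨hh, _⟩
    · rw [hh]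
    · rw [hh]
      rw [show -x / 2 = -(x/2) by ring, Real.sin_neg, abs_neg]
  rw [habs]
  set y := |x| with hy
  have hy0 : 0 ≤ y := abs_nonneg x
  rcases eq_or_lt_of_le hy0 with h0 | h0
  · rw [← h0]; simp
  have hsin := Real.sin_gt_sub_cube (by linarith : 0 < y / 2)
  have hsnn : 0 ≤ Real.sin (y / 2) :=
    Real.sin_nonneg_of_nonneg_of_le_pi (by linarith) (by linarith [Real.pi_gt_three])
  rw [_root_.abs_of_nonneg hsnn]
  nlinarith [mul_le_mul_of_nonneg_left hε hy0]

-- small arg lemma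
lemma arg_small {δ : ℝ} (hδ0 : 0 < δ) (hδ1 : δ ≤ 1) {q : ℂ}
    (hq : ‖q - 1‖ ≤ min (1/2) (Real.sin δ / 2)) :
    |Complex.arg q| ≤ δ := by
  have hq12 : ‖q - 1‖ ≤ 1/2 := le_trans hq (min_le_left _ _)
  have hqs : ‖q - 1‖ ≤ Real.sin δ / 2 := le_trans hq (min_le_right _ _)
  have hqre : (1:ℝ)/2 ≤ q.re := by
    have him := Complex.abs_re_le_norm (q - 1)
    rw [Complex.sub_re, Complex.one_re] at him
    have := abs_le.1 (le_trans him hq12)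
    linarith [this.1]
  have hqabs : (1:ℝ)/2 ≤ ‖q‖ := by
    have := Complex.abs_re_le_norm q
    calc (1:ℝ)/2 ≤ q.re := hqre
    _ ≤ |q.re| := le_abs_self _
    _ ≤ ‖q‖ := this
  have hq0 : q ≠ 0 := by
    intro hh; rw [hh] at hqabs; simp at hqabs; linarith
  have hargs : |Complex.arg q| < Real.pi / 2 :=
    Complex.abs_arg_lt_pi_div_two_iff.2 (Or.inl (by linarith))
  have him : |q.im| ≤ Real.sin δ / 2 := by
    have := Complex.abs_im_le_norm (q - 1)
    rw [Complex.sub_im, Complex.one_im, sub_zero] at this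
    linarith
  have hsinarg : Real.sin |Complex.arg q| ≤ Real.sin δ := by
    have h1 : |Real.sin (Complex.arg q)| = |q.im| / ‖q‖ := by
      rw [Complex.sin_arg, abs_div, _root_.abs_of_nonneg (norm_nonneg q)]
    have h2 : Real.sin |Complex.arg q| = |Real.sin (Complex.arg q)| := by
      rcases abs_cases (Complex.arg q) with ⟨hh, hnn⟩ | ⟨hh, hneg⟩
      · rw [hh, _root_.abs_of_nonneg (Real.sin_nonneg_of_nonneg_of_le_pi hnn
          (by linarith [Real.pi_pos, (abs_le.1 hargs.le).2]))]
      · rw [hh, Real.sin_neg]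
        have : Real.sin (Complex.arg q) ≤ 0 := by
          apply Real.sin_nonpos_of_nonpos_of_neg_pi_le (le_of_lt hneg)
          linarith [(abs_le.1 hargs.le).1, Real.pi_pos]
        rw [_root_.abs_of_nonpos this]
    rw [h2, h1]
    have hsd : 0 < Real.sin δ := Real.sin_pos_of_pos_of_lt_pi hδ0
      (by linarith [Real.pi_gt_three])
    calc |q.im| / ‖q‖ ≤ (Real.sin δ / 2) / (1/2) :=
          div_le_div₀ (by positivity) him (by norm_num) hqabs
    _ = Real.sin δ := by ring
  -- conclude by strict mono of sin on [-π/2, π/2]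
  have h1 : |Complex.arg q| ∈ Set.Icc (-(Real.pi/2)) (Real.pi/2) :=
    ⟨by linarith [abs_nonneg (Complex.arg q), Real.pi_pos], hargs.le⟩
  have h2 : δ ∈ Set.Icc (-(Real.pi/2)) (Real.pi/2) :=
    ⟨by linarith [Real.pi_pos], by linarith [Real.pi_gt_three]⟩
  exact (Real.strictMonoOn_sin.le_iff_le h1 h2).1 hsinarg

set_option maxHeartbeats 1000000 in
/-- Let `a₁ ≠ a₂` be points of the plane and let `p'` be the image
of `a₂` under the rotation about `a₁` by angle `ω ∈ (0, π)`.  Any rectifiable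
curve from `a₂` to `p'` that avoids the open disk of radius `|a₁ − a₂|`
centered at `a₁` has length at least the length `ω·|a₁ − a₂|` of the circular
arc from `a₂` to `p'`. -/
theorem curve_avoiding_disk_length_ge_arc
    (a₁ a₂ : ℂ) (h : a₁ ≠ a₂) (ω : ℝ) (hω : 0 < ω) (hωπ : ω < Real.pi)
    (p' : ℂ) (hp' : p' = a₁ + Complex.exp (ω * Complex.I) * (a₂ - a₁))
    (γ : ℝ → ℂ) (hcont : ContinuousOn γ (Set.Icc 0 1))
    (h0 : γ 0 = a₂) (h1 : γ 1 = p')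
    (havoid : ∀ t ∈ Set.Icc (0 : ℝ) 1, γ t ∉ Metric.ball a₁ (dist a₁ a₂)) :
    ENNReal.ofReal (ω * dist a₁ a₂) ≤ eVariationOn γ (Set.Icc 0 1) := by
  set r := dist a₁ a₂ with hrdef
  have hr : 0 < r := dist_pos.2 h
  set f : ℝ → ℂ := fun t => γ t - a₁ with hfdef
  have hfr : ∀ t ∈ Set.Icc (0:ℝ) 1, r ≤ ‖f t‖ := by
    intro t ht
    have h' := havoid t ht
    rw [Metric.mem_ball] at h'
    push_neg at h'
    calc r ≤ dist (γ t) a₁ := h'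
    _ = ‖f t‖ := by rw [Complex.dist_eq]
  have hfne : ∀ t ∈ Set.Icc (0:ℝ) 1, f t ≠ 0 := by
    intro t ht hh
    have := hfr t ht; rw [hh] at this; simp at this; linarith
  have hf0 : f 0 = a₂ - a₁ := by simp [hfdef, h0]
  have hf0ne : f 0 ≠ 0 := hfne 0 ⟨le_refl 0, zero_le_one⟩
  have hf1ne : f 1 ≠ 0 := hfne 1 ⟨zero_le_one, le_refl 1⟩
  have hf1 : f 1 = Complex.exp (ω * Complex.I) * f 0 := by
    simp only [hfdef, h1, hp', hf0, h0]; ring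
  suffices H : ∀ ε : ℝ, 0 < ε → ε < 1 →
      ENNReal.ofReal ((1 - ε) * (ω * r)) ≤ eVariationOn γ (Set.Icc 0 1) by
    by_contra hcon
    push_neg at hcon
    have htop : eVariationOn γ (Set.Icc 0 1) ≠ ⊤ := hcon.ne_top
    set V := (eVariationOn γ (Set.Icc 0 1)).toReal with hVdef
    have hV : V < ω * r := (ENNReal.lt_ofReal_iff_toReal_lt htop).1 hcon
    have hV0 : 0 ≤ V := ENNReal.toReal_nonneg
    have hωr : 0 < ω * r := mul_pos hω hr
    set ε := (ω * r - V) / (2 * (ω * r)) with hεdef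
    have hε0 : 0 < ε := div_pos (by linarith) (by linarith)
    have hε1 : ε < 1 := by
      rw [hεdef, div_lt_one (by linarith)]; linarith
    have hkey : V < (1 - ε) * (ω * r) := by
      have heq : (1 - ε) * (ω * r) = (ω * r + V) / 2 := by
        rw [hεdef]; field_simp; ring
      rw [heq]; linarith
    have hle := H ε hε0 hε1
    rw [show eVariationOn γ (Set.Icc 0 1) = ENNReal.ofReal V by
      rw [hVdef, ENNReal.ofReal_toReal htop]] at hle
    rw [ENNReal.ofReal_le_ofReal_iff hV0] at hle
    linarith
  intro ε hε0 hε1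
  set δ := min 1 (4 * Real.sqrt ε) with hδdef
  have hδ0 : 0 < δ := lt_min one_pos (by positivity)
  have hδ1 : δ ≤ 1 := min_le_left _ _
  have hδε : δ ^ 2 ≤ 16 * ε := by
    have h1' : δ ≤ 4 * Real.sqrt ε := min_le_right _ _
    have h2' := Real.sq_sqrt hε0.le
    nlinarith [Real.sqrt_nonneg ε, hδ0.le]
  set η := min (1/2) (Real.sin δ / 2) with hηdef
  have hsδ : 0 < Real.sin δ :=
    Real.sin_pos_of_pos_of_lt_pi hδ0 (by linarith [Real.pi_gt_three])
  have hη0 : 0 < η := lt_min (by norm_num) (by linarith)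
  have hUC : UniformContinuousOn γ (Set.Icc 0 1) :=
    isCompact_Icc.uniformContinuousOn_of_continuous hcont
  rw [Metric.uniformContinuousOn_iff] at hUC
  obtain ⟨δ', hδ'0, hδ'⟩ := hUC (r * η) (by positivity)
  obtain ⟨N, hN⟩ := exists_nat_gt (max 1 (1 / δ'))
  have hN1 : (1:ℝ) ≤ N := le_of_lt (lt_of_le_of_lt (le_max_left _ _) hN)
  have hN0 : (0:ℝ) < N := by linarith
  have hNne : (N:ℝ) ≠ 0 := ne_of_gt hN0
  have hNδ : 1 / (N:ℝ) < δ' := by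
    have h' := lt_of_le_of_lt (le_max_right 1 (1 / δ')) hN
    rw [div_lt_iff₀ hδ'0] at h'
    rw [div_lt_iff₀ hN0]; linarith
  set u : ℕ → ℝ := fun i => ((min i N : ℕ) : ℝ) / (N:ℝ) with hudef
  have humono : Monotone u := by
    intro i j hij
    have hc : ((min i N : ℕ):ℝ) ≤ ((min j N : ℕ):ℝ) :=
      Nat.cast_le.2 (min_le_min hij le_rfl)
    simp only [hudef]
    gcongr
  have humem : ∀ i, u i ∈ Set.Icc (0:ℝ) 1 := by
    intro i
    constructor
    · positivity
    · rw [div_le_one hN0]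
      exact_mod_cast Nat.cast_le.2 (min_le_right i N)
  have hu0 : u 0 = 0 := by simp [hudef]
  have huN : u N = 1 := by
    simp only [hudef, min_self]
    exact div_self hNne
  have hustep : ∀ i, dist (u (i+1)) (u i) < δ' := by
    intro i
    have h1' : (min (i+1) N : ℕ) ≤ min i N + 1 := by omega
    have h2' : (min i N : ℕ) ≤ min (i+1) N := min_le_min (Nat.le_succ i) le_rfl
    have hc1 : ((min (i+1) N : ℕ):ℝ) ≤ ((min i N : ℕ):ℝ) + 1 := by exact_mod_cast h1'
    have hc2 : ((min i N : ℕ):ℝ) ≤ ((min (i+1) N : ℕ):ℝ) := by exact_mod_cast h2'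
    rw [Real.dist_eq, hudef]
    calc |((min (i+1) N : ℕ):ℝ)/(N:ℝ) - ((min i N : ℕ):ℝ)/(N:ℝ)|
        = |((min (i+1) N : ℕ):ℝ) - ((min i N : ℕ):ℝ)|/(N:ℝ) := by
          rw [div_sub_div_same, abs_div, _root_.abs_of_nonneg hN0.le]
    _ ≤ 1/(N:ℝ) := by
          gcongr
          rw [_root_.abs_of_nonneg (by linarith)]
          linarith
    _ < δ' := hNδ
  set Δ : ℕ → ℝ := fun i => Complex.arg (f (u (i+1)) / f (u i)) with hΔdef
  have hΔsmall : ∀ i, |Δ i| ≤ δ := by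
    intro i
    apply arg_small hδ0 hδ1
    have hne := hfne _ (humem i)
    have h1' : f (u (i+1)) / f (u i) - 1 = (f (u (i+1)) - f (u i)) / f (u i) := by
      field_simp
    rw [h1', norm_div]
    have h2' : ‖f (u (i+1)) - f (u i)‖ ≤ r * η := by
      have := hδ' _ (humem (i+1)) _ (humem i) (hustep i)
      rw [Complex.dist_eq] at this
      have heq : γ (u (i+1)) - γ (u i) = f (u (i+1)) - f (u i) := by
        simp [hfdef]
      rw [heq] at this
      exact this.le
    have h3' : r ≤ ‖f (u i)‖ := hfr _ (humem i)
    calc ‖f (u (i+1)) - f (u i)‖ / ‖f (u i)‖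
        ≤ (r * η) / r := div_le_div₀ (by positivity) h2' hr h3'
    _ = η := by field_simp
  have hchord : ∀ i, ENNReal.ofReal ((1-ε) * r * |Δ i|) ≤ edist (γ (u (i+1))) (γ (u i)) := by
    intro i
    rw [edist_dist, Complex.dist_eq]
    apply ENNReal.ofReal_le_ofReal
    have hc := chord_lb hr (hfr _ (humem (i+1))) (hfr _ (humem i))
    have hs := two_sin_half_lb (le_trans (hΔsmall i) hδ1)
      (le_trans (pow_le_pow_left₀ (abs_nonneg _) (hΔsmall i) 2) hδε)
    calc (1-ε) * r * |Δ i| = r * ((1-ε) * |Δ i|) := by ring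
    _ ≤ r * (2 * |Real.sin (Δ i / 2)|) := mul_le_mul_of_nonneg_left hs hr.le
    _ = 2 * r * |Real.sin (Δ i / 2)| := by ring
    _ ≤ ‖f (u (i+1)) - f (u i)‖ := hc
    _ = ‖γ (u (i+1)) - γ (u i)‖ := by
        congr 1; simp [hfdef]
  set S := ∑ i ∈ Finset.range N, Δ i with hSdef
  have hS : (S : Real.Angle) = (ω : Real.Angle) := by
    have hcoe : (S : Real.Angle) = ∑ i ∈ Finset.range N, ((Δ i : ℝ) : Real.Angle) := by
      rw [hSdef]
      exact map_sum Real.Angle.coeHom Δ (Finset.range N)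
    rw [hcoe]
    have hterm : ∀ i, ((Δ i : ℝ) : Real.Angle) =
        (Complex.arg (f (u (i+1))) : Real.Angle) - (Complex.arg (f (u i)) : Real.Angle) :=
      fun i => Complex.arg_div_coe_angle (hfne _ (humem (i+1))) (hfne _ (humem i))
    rw [Finset.sum_congr rfl fun i _ => hterm i]
    rw [Finset.sum_range_sub (fun i => (Complex.arg (f (u i)) : Real.Angle))]
    rw [huN, hu0]
    rw [← Complex.arg_div_coe_angle hf1ne hf0ne]
    have hdiv : f 1 / f 0 = Complex.exp (ω * Complex.I) := by
      rw [hf1]; field_simp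
    rw [hdiv, Complex.exp_mul_I]
    have heq : Complex.cos ω + Complex.sin ω * I =
        ((Real.Angle.cos (ω : Real.Angle) : ℝ) : ℂ) + ((Real.Angle.sin (ω : Real.Angle) : ℝ) : ℂ) * I := by
      rw [Real.Angle.cos_coe, Real.Angle.sin_coe, Complex.ofReal_cos, Complex.ofReal_sin]
    rw [heq, Complex.arg_cos_add_sin_mul_I_coe_angle]
  obtain ⟨k, hk⟩ := Real.Angle.angle_eq_iff_two_pi_dvd_sub.1 hS
  have hSω : ω ≤ |S| := by
    have hπ := Real.pi_pos
    rcases lt_trichotomy k 0 with hkneg | hk0 | hkpos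
    · have hkle' : k ≤ -1 := by omega
      have hkle : (k:ℝ) ≤ -1 := by exact_mod_cast hkle'
      rw [le_abs]; right
      nlinarith
    · rw [hk0] at hk
      simp at hk
      rw [le_abs]; left; linarith
    · have hkge : (1:ℝ) ≤ k := by exact_mod_cast hkpos
      rw [le_abs]; left
      nlinarith
  calc ENNReal.ofReal ((1-ε) * (ω * r))
      ≤ ENNReal.ofReal ((1-ε) * r * |S|) := by
        apply ENNReal.ofReal_le_ofReal
        have h9 : (1-ε) * r * ω ≤ (1-ε) * r * |S| :=
          mul_le_mul_of_nonneg_left hSω (mul_nonneg (by linarith) hr.le)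
        linarith
  _ ≤ ENNReal.ofReal ((1-ε) * r * ∑ i ∈ Finset.range N, |Δ i|) := by
        apply ENNReal.ofReal_le_ofReal
        exact mul_le_mul_of_nonneg_left (Finset.abs_sum_le_sum_abs Δ (Finset.range N))
          (mul_nonneg (by linarith) hr.le)
  _ = ∑ i ∈ Finset.range N, ENNReal.ofReal ((1-ε) * r * |Δ i|) := by
        rw [Finset.mul_sum]
        exact ENNReal.ofReal_sum_of_nonneg fun i _ =>
          mul_nonneg (mul_nonneg (by linarith) hr.le) (abs_nonneg _)
  _ ≤ ∑ i ∈ Finset.range N, edist (γ (u (i+1))) (γ (u i)) :=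
        Finset.sum_le_sum fun i _ => hchord i
  _ ≤ eVariationOn γ (Set.Icc 0 1) := eVariationOn.sum_le humono humem
end

section
/- In the plane, suppose points c′, a₂′, a₂″ are such that a₂″ is obtained from a₂′ by rotating about a point x by angle ω ∈ (0, π/6), where x lies on segment between interior points near the centroid, with |x − a₂′| ≥ d > 0. If a curve from a₂′ must pass on the far side of a₂″ (outside the disk D(x, |x − a₂′|)), then the turn angle at a₂′ between the incoming direction from c′ and the outgoing tangent exceeds the angle ∠(c′, a₂′, t) where t is the tangent direction to the circle ∂D(x,|x−a₂′|) at a₂′; in particular this turn angle is at least π/2 minus the angle ∠(x, a₂′, c′). -/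
open Complex InnerProductGeometry
open RealInnerProductSpace

lemma inner_coords' (z w : ℂ) : ⟪z, w⟫ = z.re * w.re + z.im * w.im := by
  rw [Complex.inner]; simp [Complex.mul_re]; ring

lemma nsq' (z : ℂ) : ‖z‖ ^ 2 = z.re ^ 2 + z.im ^ 2 := by
  rw [Complex.sq_norm, Complex.normSq_apply]; ring

lemma key1' (P Q R S : ℝ) (hP : 0 ≤ P) (hR : R ≤ 0) (hPR : 0 ≤ P * R - Q * S) :
    (P * R - Q * S) ^ 2 ≤ (P ^ 2 + Q ^ 2) * S ^ 2 := by
  nlinarith [mul_nonneg (mul_nonneg hP hPR) (neg_nonneg.2 hR), sq_nonneg (P * S),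
    sq_nonneg (P * R)]

lemma key2' (a1 a2 b1 b2 w1 w2 : ℝ)
    (h1 : 0 ≤ w1 * a1 + w2 * a2) (h2 : w1 * b1 + w2 * b2 ≤ 0)
    (h3 : 0 ≤ a1 * b1 + a2 * b2) :
    (a1 * b1 + a2 * b2) ^ 2 * (w1 ^ 2 + w2 ^ 2) +
      (w1 * b1 + w2 * b2) ^ 2 * (a1 ^ 2 + a2 ^ 2) ≤
      (a1 ^ 2 + a2 ^ 2) * (b1 ^ 2 + b2 ^ 2) * (w1 ^ 2 + w2 ^ 2) := by
  rcases eq_or_lt_of_le (by positivity : (0:ℝ) ≤ w1 ^ 2 + w2 ^ 2) with hw | hw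
  · have hw1 : w1 = 0 := by nlinarith [sq_nonneg w1, sq_nonneg w2]
    have hw2 : w2 = 0 := by nlinarith [sq_nonneg w1, sq_nonneg w2]
    simp [hw1, hw2]
  · set P := w1 * a1 + w2 * a2 with hPdef
    set Q := a1 * w2 - a2 * w1 with hQdef
    set R := w1 * b1 + w2 * b2 with hRdef
    set S := w1 * b2 - w2 * b1 with hSdef
    have hPR : 0 ≤ P * R - Q * S := by
      have : P * R - Q * S = (a1 * b1 + a2 * b2) * (w1 ^ 2 + w2 ^ 2) := by
        rw [hPdef, hQdef, hRdef, hSdef]; ring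
      rw [this]; positivity
    have hk := key1' P Q R S h1 h2 hPR
    have hident :
        ((a1 ^ 2 + a2 ^ 2) * (b1 ^ 2 + b2 ^ 2) * (w1 ^ 2 + w2 ^ 2) -
          ((a1 * b1 + a2 * b2) ^ 2 * (w1 ^ 2 + w2 ^ 2) +
            (w1 * b1 + w2 * b2) ^ 2 * (a1 ^ 2 + a2 ^ 2))) * (w1 ^ 2 + w2 ^ 2) =
          (P ^ 2 + Q ^ 2) * S ^ 2 - (P * R - Q * S) ^ 2 := by
      rw [hPdef, hQdef, hRdef, hSdef]; ring
    have hD := (mul_nonneg_iff_of_pos_right hw).mp (by rw [hident]; linarith)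
    rw [hRdef] at h2 ⊢
    linarith

/-- In the plane, let `a₂″` be obtained from `a₂′` by rotating
about a point `x` by angle `ω ∈ (0, π/6)`, with `|x − a₂′| ≥ d > 0`, and let
`c′` be a further (distinct) point.  Suppose a curve `γ` starts at `a₂′` with
nonzero one-sided tangent `dir`, reaches `a₂″` while passing on the far side
of it (outside the open disk `D(x, |x − a₂′|)`).  Then the turn angle at `a₂′`
between the incoming direction from `c′` and the outgoing tangent `dir` is at
least `π/2` minus the angle `∠(x, a₂′, c′)`. -/
theorem turn_angle_lower_bound_at_a2
    (x c' p : ℂ) (hxp : x ≠ p) (hcp : c' ≠ p) (hxc : x ≠ c')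
    (d : ℝ) (hd : 0 < d) (hdist : d ≤ dist x p)
    (ω : ℝ) (hω : 0 < ω) (hω6 : ω < Real.pi / 6)
    (p'' : ℂ) (hp'' : p'' = x + Complex.exp (ω * Complex.I) * (p - x))
    (γ : ℝ → ℂ) (h0 : γ 0 = p) (h1 : γ 1 = p'')
    (havoid : ∀ t ∈ Set.Icc (0 : ℝ) 1, γ t ∉ Metric.ball x (dist x p))
    (dir : ℂ) (hdir : dir ≠ 0)
    (hderiv : HasDerivWithinAt γ dir (Set.Ici 0) 0) :
    Real.pi / 2 - EuclideanGeometry.angle x p c' ≤ angle dir (c' - p) := by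
  -- Step 1: the outgoing direction points (weakly) outward: ⟪p - x, dir⟫ ≥ 0
  have hinner : 0 ≤ ⟪p - x, dir⟫ := by
    have hF : HasDerivWithinAt (fun t => ‖γ t - x‖ ^ 2) (2 * ⟪γ 0 - x, dir⟫)
        (Set.Ici 0) 0 := (hderiv.sub_const x).norm_sq
    have hmin : IsLocalMinOn (fun t => ‖γ t - x‖ ^ 2) (Set.Ici 0) 0 := by
      have hI : Set.Icc (0:ℝ) 1 ∈ nhdsWithin (0:ℝ) (Set.Ici 0) :=
        Icc_mem_nhdsGE one_pos
      filter_upwards [hI] with t ht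
      have h2 := havoid t ht
      simp only [Metric.mem_ball, not_lt] at h2
      have h3 : dist x p ≤ ‖γ t - x‖ := by rw [← dist_eq_norm]; exact h2
      simp only [h0]
      calc ‖p - x‖ ^ 2 = (dist x p) ^ 2 := by rw [← dist_eq_norm, dist_comm]
        _ ≤ ‖γ t - x‖ ^ 2 := by gcongr
    have hy : (1:ℝ) ∈ posTangentConeAt (Set.Ici (0:ℝ)) 0 := by
      apply mem_posTangentConeAt_of_segment_subset
      intro z hz
      rcases hz with ⟨a, b, ha, hb, hab, rfl⟩
      simp only [Set.mem_Ici]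
      positivity
    have hmain := hmin.hasFDerivWithinAt_nonneg hF.hasFDerivWithinAt hy
    simp only [h0] at hmain
    simp only [ContinuousLinearMap.toSpanSingleton_apply,
      one_smul] at hmain
    linarith
  -- setup
  set α := EuclideanGeometry.angle x p c' with hαdef
  have hB : c' - p ≠ 0 := sub_ne_zero.mpr hcp
  have hW : p - x ≠ 0 := sub_ne_zero.mpr (Ne.symm hxp)
  have hnA : (0:ℝ) < ‖dir‖ := norm_pos_iff.mpr hdir
  have hnB : (0:ℝ) < ‖c' - p‖ := norm_pos_iff.mpr hB
  have hnW : (0:ℝ) < ‖p - x‖ := norm_pos_iff.mpr hW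
  have hα0 : 0 ≤ α := EuclideanGeometry.angle_nonneg x p c'
  have hαπ : α ≤ Real.pi := EuclideanGeometry.angle_le_pi x p c'
  by_cases hhalf : Real.pi / 2 ≤ α
  · linarith [angle_nonneg dir (c' - p)]
  push_neg at hhalf
  -- α < π/2, so cos α ≥ 0, hence ⟪p - x, c' - p⟫ ≤ 0
  have hαeq : α = angle (x - p) (c' - p) := rfl
  have hcosα : Real.cos α = ⟪x - p, c' - p⟫ / (‖x - p‖ * ‖c' - p‖) := by
    rw [hαeq]; exact cos_angle _ _
  have hcosα0 : 0 ≤ Real.cos α :=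
    Real.cos_nonneg_of_mem_Icc ⟨by linarith, by linarith⟩
  have hnxp : (0:ℝ) < ‖x - p‖ := by rwa [norm_sub_rev]
  have hWB : ⟪p - x, c' - p⟫ ≤ 0 := by
    have h4 : 0 ≤ ⟪x - p, c' - p⟫ := by
      have hpos : (0:ℝ) < ‖x - p‖ * ‖c' - p‖ := mul_pos hnxp hnB
      have h6 := hcosα0
      rw [hcosα, le_div_iff₀ hpos] at h6
      simpa using h6
    have h5 : (p - x) = -(x - p) := by ring
    rw [h5, inner_neg_left]
    linarith
  -- main contradiction argument
  by_contra hcon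
  push_neg at hcon
  have hAB01 : angle dir (c' - p) ∈ Set.Icc 0 Real.pi :=
    ⟨angle_nonneg _ _, angle_le_pi _ _⟩
  have hmem2 : Real.pi / 2 - α ∈ Set.Icc 0 Real.pi :=
    ⟨by linarith, by linarith [Real.pi_pos]⟩
  have hs : Real.cos (Real.pi / 2 - α) < Real.cos (angle dir (c' - p)) :=
    Real.strictAntiOn_cos hAB01 hmem2 hcon
  rw [Real.cos_pi_div_two_sub] at hs
  have hsin0 : 0 ≤ Real.sin α := Real.sin_nonneg_of_nonneg_of_le_pi hα0 hαπ
  have hcosAB : Real.cos (angle dir (c' - p)) = ⟪dir, c' - p⟫ / (‖dir‖ * ‖c' - p‖) :=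
    cos_angle _ _
  rcases le_or_gt (⟪dir, c' - p⟫) 0 with hI1 | hI1
  · have hc0 : Real.cos (angle dir (c' - p)) ≤ 0 := by
      rw [hcosAB]
      exact div_nonpos_of_nonpos_of_nonneg hI1 (by positivity)
    linarith
  · set I1 := ⟪dir, c' - p⟫ with hI1def
    set I2 := ⟪p - x, c' - p⟫ with hI2def
    clear_value I1 I2
    have hkey : I1 ^ 2 * ‖p - x‖ ^ 2 + I2 ^ 2 * ‖dir‖ ^ 2 ≤
        ‖dir‖ ^ 2 * ‖c' - p‖ ^ 2 * ‖p - x‖ ^ 2 := by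
      have h1' : 0 ≤ (p - x).re * dir.re + (p - x).im * dir.im := by
        rw [← inner_coords']; exact hinner
      have h2' : (p - x).re * (c' - p).re + (p - x).im * (c' - p).im ≤ 0 := by
        rw [← inner_coords', ← hI2def]; exact hWB
      have h3' : 0 ≤ dir.re * (c' - p).re + dir.im * (c' - p).im := by
        rw [← inner_coords', ← hI1def]; exact hI1.le
      have hk2 := key2' dir.re dir.im (c' - p).re (c' - p).im (p - x).re (p - x).im
        h1' h2' h3'
      rw [hI1def, hI2def, inner_coords' dir (c' - p), inner_coords' (p - x) (c' - p),
        nsq' dir, nsq' (c' - p), nsq' (p - x)]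
      linarith
    have hcosα2 : Real.cos α ^ 2 = I2 ^ 2 / (‖p - x‖ ^ 2 * ‖c' - p‖ ^ 2) := by
      have h5 : ⟪x - p, c' - p⟫ = -I2 := by
        rw [show x - p = -(p - x) by ring, inner_neg_left, hI2def]
      rw [hcosα, h5, norm_sub_rev x p]
      field_simp
    have hsq : Real.cos (angle dir (c' - p)) ^ 2 ≤ Real.sin α ^ 2 := by
      rw [Real.sin_sq, hcosα2, hcosAB]
      rw [div_pow, mul_pow, le_sub_iff_add_le,
        div_add_div _ _ (by positivity) (by positivity), div_le_one (by positivity)]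
      have hmul := mul_le_mul_of_nonneg_right hkey (sq_nonneg ‖c' - p‖)
      linarith [hmul]
    have hlt := pow_lt_pow_left₀ hs hsin0 two_ne_zero
    linarith [hsq, hlt]
end
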